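/- arXiv:1403.7635 — 6 statements merged into one kernel-verified Lean document; each statement's English description precedes it below -/
import Mathlib

section
/- Let p ≥ 2 and let X have an elliptical distribution F ∈ E_p(μ,V) on ℝ^p. Then μ is the unique minimizer over b ∈ ℝ^p of the function b ↦ E(‖X − b‖ − ‖X‖); that is, the spatial median of F equals the location parameter μ. -/
open MeasureTheory Matrix Real

/-- If p ≥ 2 and X has an elliptical distribution F ∈ E_p(μ,V) on ℝ^p,
i.e. F has Lebesgue density x ↦ det(V)^{-1/2} g((x−μ)ᵀ V⁻¹ (x−μ)) with V symmetric
positive definite, then μ is the unique minimizer over b of b ↦ E(‖X − b‖ − ‖X‖):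
the spatial median of F equals μ. -/
theorem spatial_median_of_elliptical
    {p : ℕ} (hp : 2 ≤ p)
    (μ : EuclideanSpace ℝ (Fin p)) (V : Matrix (Fin p) (Fin p) ℝ) (hV : V.PosDef)
    (g : ℝ → ℝ) (hg : ∀ t, 0 ≤ t → 0 ≤ g t)
    (F : Measure (EuclideanSpace ℝ (Fin p))) [IsProbabilityMeasure F]
    (hF : F = volume.withDensity fun x => ENNReal.ofReal
        ((Real.sqrt V.det)⁻¹ * g (∑ i, ∑ j, (x i - μ i) * V⁻¹ i j * (x j - μ j)))) :
    ∀ b : EuclideanSpace ℝ (Fin p), b ≠ μ →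
      (∫ x, (‖x - μ‖ - ‖x‖) ∂F) < ∫ x, (‖x - b‖ - ‖x‖) ∂F := by
  intro b hb
  set c : EuclideanSpace ℝ (Fin p) := μ + μ with hc
  set f : EuclideanSpace ℝ (Fin p) → ENNReal := fun x => ENNReal.ofReal
      ((Real.sqrt V.det)⁻¹ * g (∑ i, ∑ j, (x i - μ i) * V⁻¹ i j * (x j - μ j))) with hfdef
  -- invariance of the density under the point reflection x ↦ c - x
  have hfT : ∀ x, f (c - x) = f x := by
    intro x
    have hQ : (∑ i, ∑ j, ((c - x) i - μ i) * V⁻¹ i j * ((c - x) j - μ j))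
        = ∑ i, ∑ j, (x i - μ i) * V⁻¹ i j * (x j - μ j) := by
      refine Finset.sum_congr rfl fun i _ => Finset.sum_congr rfl fun j _ => ?_
      simp only [hc, PiLp.sub_apply, PiLp.add_apply]
      ring
    simp only [hfdef, hQ]
  -- the reflection as a measurable equivalence
  set T : EuclideanSpace ℝ (Fin p) ≃ᵐ EuclideanSpace ℝ (Fin p) :=
    (MeasurableEquiv.neg _).trans (MeasurableEquiv.addLeft c) with hTdef
  have hTcoe : ∀ x, T x = c - x := fun x => by
    simp [hTdef, sub_eq_add_neg]
  have hTcoe' : ⇑T = fun x => c - x := funext hTcoe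
  have hTvol : MeasurePreserving (⇑T)
      (volume : Measure (EuclideanSpace ℝ (Fin p))) volume := by
    rw [hTcoe']; exact Measure.measurePreserving_sub_left volume c
  -- F is invariant under T
  have hmapF : F.map T = F := by
    ext s hs
    rw [Measure.map_apply T.measurable hs, hF, withDensity_apply _ (T.measurable hs),
        withDensity_apply _ hs]
    have h1 : (volume.restrict (⇑T ⁻¹' s)).map T = volume.restrict s := by
      rw [← Measure.restrict_map T.measurable hs, hTvol.map_eq]
    have h2 : ∫⁻ x in s, f x = ∫⁻ x in ⇑T ⁻¹' s, f (T x) := by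
      rw [← h1, lintegral_map_equiv f T]
    rw [h2]
    exact lintegral_congr fun x => by rw [hTcoe, hfT]
  have hTF : MeasurePreserving (⇑T) F F := ⟨T.measurable, hmapF⟩
  -- integrability facts
  have hint0 : ∀ a : EuclideanSpace ℝ (Fin p),
      Integrable (fun x => ‖x - a‖ - ‖x‖) F := by
    intro a
    refine (integrable_const ‖a‖).mono'
      (((continuous_id.sub continuous_const).norm.sub continuous_norm).aestronglyMeasurable) ?_
    refine Filter.Eventually.of_forall fun x => ?_
    rw [Real.norm_eq_abs]
    calc |‖x - a‖ - ‖x‖| ≤ ‖(x - a) - x‖ := abs_norm_sub_norm_le _ _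
      _ = ‖a‖ := by rw [show (x - a) - x = -a by abel, norm_neg]
  have hintφ : Integrable (fun x => ‖x - b‖ - ‖x - μ‖) F := by
    refine (integrable_const ‖μ - b‖).mono'
      (((continuous_id.sub continuous_const).norm.sub
        (continuous_id.sub continuous_const).norm).aestronglyMeasurable) ?_
    refine Filter.Eventually.of_forall fun x => ?_
    rw [Real.norm_eq_abs]
    calc |‖x - b‖ - ‖x - μ‖| ≤ ‖(x - b) - (x - μ)‖ := abs_norm_sub_norm_le _ _
      _ = ‖μ - b‖ := by rw [show (x - b) - (x - μ) = μ - b by abel]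
  have hnormc : ∀ x : EuclideanSpace ℝ (Fin p), ‖x - μ‖ = ‖c - x - μ‖ := fun x => by
    rw [show c - x - μ = -(x - μ) by rw [hc]; abel, norm_neg]
  have hintφT : Integrable (fun x => ‖c - x - b‖ - ‖x - μ‖) F := by
    refine (integrable_const ‖μ - b‖).mono'
      ((((continuous_const.sub continuous_id).sub continuous_const).norm.sub
        (continuous_id.sub continuous_const).norm).aestronglyMeasurable) ?_
    refine Filter.Eventually.of_forall fun x => ?_
    rw [Real.norm_eq_abs, hnormc x]
    calc |‖c - x - b‖ - ‖c - x - μ‖| ≤ ‖(c - x - b) - (c - x - μ)‖ := abs_norm_sub_norm_le _ _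
      _ = ‖μ - b‖ := by rw [show (c - x - b) - (c - x - μ) = μ - b by abel]
  -- the reflected integral equals the original one
  have hcomp : ∫ x, (‖c - x - b‖ - ‖x - μ‖) ∂F = ∫ x, (‖x - b‖ - ‖x - μ‖) ∂F := by
    have h := hTF.integral_comp T.measurableEmbedding
      (fun x : EuclideanSpace ℝ (Fin p) => ‖x - b‖ - ‖x - μ‖)
    rw [← h]
    refine integral_congr_ae (Filter.Eventually.of_forall fun x => ?_)
    show ‖c - x - b‖ - ‖x - μ‖ = ‖T x - b‖ - ‖T x - μ‖
    rw [hTcoe x, ← hnormc x]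
  -- pointwise nonnegativity
  have hψ0 : ∀ x : EuclideanSpace ℝ (Fin p),
      0 ≤ (‖x - b‖ - ‖x - μ‖) + (‖c - x - b‖ - ‖x - μ‖) := by
    intro x
    have h := norm_sub_le (x - b) (c - x - b)
    rw [show (x - b) - (c - x - b) = (x - μ) + (x - μ) by rw [hc]; abel] at h
    have h2 : ‖(x - μ) + (x - μ)‖ = 2 * ‖x - μ‖ := by
      rw [← two_smul ℝ, norm_smul]; simp
    rw [h2] at h
    linarith
  -- the line through b and μ
  have hmem : ∀ t : ℝ, t • (μ - b) + b
      ∈ affineSpan ℝ ({b, μ} : Set (EuclideanSpace ℝ (Fin p))) := by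
    intro t
    have := AffineMap.lineMap_mem_affineSpan_pair (k := ℝ) t b μ
    simpa [AffineMap.lineMap_apply, vsub_eq_sub, vadd_eq_add] using this
  have hspan_ne : affineSpan ℝ ({b, μ} : Set (EuclideanSpace ℝ (Fin p))) ≠ ⊤ := by
    intro h
    have h1 : vectorSpan ℝ ({b, μ} : Set (EuclideanSpace ℝ (Fin p))) = ⊤ := by
      rw [← direction_affineSpan, h, AffineSubspace.direction_top]
    rw [vectorSpan_pair] at h1
    have h2 : Module.finrank ℝ (ℝ ∙ (b -ᵥ μ)) = 1 :=
      finrank_span_singleton (by simpa [vsub_eq_sub, sub_eq_zero] using hb)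
    rw [h1, finrank_top, finrank_euclideanSpace_fin] at h2
    omega
  have hline0 : F (affineSpan ℝ ({b, μ} : Set (EuclideanSpace ℝ (Fin p))) : Set _) = 0 := by
    rw [hF]
    exact withDensity_absolutelyContinuous volume _
      (Measure.addHaar_affineSubspace volume _ hspan_ne)
  -- strict positivity off the line
  have hstrict : ∀ x : EuclideanSpace ℝ (Fin p),
      x ∉ (affineSpan ℝ ({b, μ} : Set (EuclideanSpace ℝ (Fin p))) : Set _) →
      0 < (‖x - b‖ - ‖x - μ‖) + (‖c - x - b‖ - ‖x - μ‖) := by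
    intro x hx
    rcases lt_or_eq_of_le (hψ0 x) with h | h
    · exact h
    exfalso
    -- equality case: x must lie on the line through b and μ
    have heq : ‖(x - b) + (-(c - x - b))‖ = ‖x - b‖ + ‖-(c - x - b)‖ := by
      rw [norm_neg, show (x - b) + (-(c - x - b)) = (x - μ) + (x - μ) by rw [hc]; abel,
        ← two_smul ℝ, norm_smul]
      simp only [Real.norm_ofNat]
      linarith
    have hsr : SameRay ℝ (x - b) (-(c - x - b)) := sameRay_iff_norm_add.mpr heq
    have hxline : x ∈ affineSpan ℝ ({b, μ} : Set (EuclideanSpace ℝ (Fin p))) := by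
      rcases hsr with h0 | h0 | ⟨r, s, hr, hs, hrs⟩
      · have hxb : x = b := by rwa [sub_eq_zero] at h0
        rw [hxb]
        exact left_mem_affineSpan_pair ℝ b μ
      · have h0' : c - x - b = 0 := neg_eq_zero.mp h0
        have hxv : x = (2 : ℝ) • (μ - b) + b := by
          rw [sub_sub, sub_eq_zero] at h0'
          have hx2 : x = c - b := by rw [h0']; abel
          rw [hx2, hc, two_smul]; abel
        rw [hxv]; exact hmem 2
      · have hw : -(c - x - b) = (x - b) - ((μ - b) + (μ - b)) := by rw [hc]; abel
        rw [hw] at hrs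
        have key : (r - s) • (x - b) = (-(2 * s)) • (μ - b) := by
          rw [sub_smul, hrs, smul_sub]
          module
        by_cases hrs' : r = s
        · rw [hrs', sub_self, zero_smul] at key
          rcases smul_eq_zero.mp key.symm with h' | h'
          · nlinarith
          · exact (hb (sub_eq_zero.mp h').symm).elim
        · have hne : r - s ≠ 0 := sub_ne_zero.mpr hrs'
          have hxv : x - b = ((r - s)⁻¹ * (-(2 * s))) • (μ - b) := by
            rw [mul_smul, ← key, smul_smul, inv_mul_cancel₀ hne, one_smul]
          have hx2 : x = ((r - s)⁻¹ * (-(2 * s))) • (μ - b) + b := by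
            rw [← hxv]; abel
          rw [hx2]; exact hmem _
    exact hx hxline
  -- positivity of the symmetrized integral
  have hintψ : Integrable
      (fun x => (‖x - b‖ - ‖x - μ‖) + (‖c - x - b‖ - ‖x - μ‖)) F := hintφ.add hintφT
  have hpos : 0 < ∫ x, ((‖x - b‖ - ‖x - μ‖) + (‖c - x - b‖ - ‖x - μ‖)) ∂F := by
    rw [integral_pos_iff_support_of_nonneg (fun x => hψ0 x) hintψ]
    have hsub : (Set.univ : Set (EuclideanSpace ℝ (Fin p))) ⊆
        Function.support (fun x => (‖x - b‖ - ‖x - μ‖) + (‖c - x - b‖ - ‖x - μ‖)) ∪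
        (affineSpan ℝ ({b, μ} : Set (EuclideanSpace ℝ (Fin p))) : Set _) := by
      intro x _
      by_cases hx : x ∈ (affineSpan ℝ ({b, μ} : Set (EuclideanSpace ℝ (Fin p))) : Set _)
      · exact Or.inr hx
      · exact Or.inl (hstrict x hx).ne'
    have h1 : (1 : ENNReal) ≤
        F (Function.support (fun x => (‖x - b‖ - ‖x - μ‖) + (‖c - x - b‖ - ‖x - μ‖))) +
        F (affineSpan ℝ ({b, μ} : Set (EuclideanSpace ℝ (Fin p))) : Set _) := by
      calc (1 : ENNReal) = F Set.univ := measure_univ.symm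
        _ ≤ F (Function.support (fun x => (‖x - b‖ - ‖x - μ‖) + (‖c - x - b‖ - ‖x - μ‖)) ∪
            (affineSpan ℝ ({b, μ} : Set (EuclideanSpace ℝ (Fin p))) : Set _)) :=
          measure_mono hsub
        _ ≤ _ := measure_union_le _ _
    rw [hline0, add_zero] at h1
    exact lt_of_lt_of_le (by norm_num) h1
  have hsplit : ∫ x, ((‖x - b‖ - ‖x - μ‖) + (‖c - x - b‖ - ‖x - μ‖)) ∂F
      = ∫ x, (‖x - b‖ - ‖x - μ‖) ∂F + ∫ x, (‖c - x - b‖ - ‖x - μ‖) ∂F :=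
    integral_add hintφ hintφT
  have hφpos : 0 < ∫ x, (‖x - b‖ - ‖x - μ‖) ∂F := by
    rw [hsplit, hcomp] at hpos; linarith
  have hdiff : ∫ x, (‖x - b‖ - ‖x‖) ∂F - ∫ x, (‖x - μ‖ - ‖x‖) ∂F
      = ∫ x, (‖x - b‖ - ‖x - μ‖) ∂F := by
    rw [← integral_sub (hint0 b) (hint0 μ)]
    exact integral_congr_ae (Filter.Eventually.of_forall fun x => by ring)
  linarith
end

section
/- Let p ≥ 2, let X have an elliptical distribution F ∈ E_p(μ,V) on ℝ^p, and let V = U Λ U^T be an eigenvalue decomposition of V with U orthogonal and Λ = diag(λ_1,…,λ_p), 0 < λ_p ≤ … ≤ λ_1. Then the spatial sign covariance matrix satisfies S(F) = U Δ U^T, where Δ = diag(δ_1,…,δ_p) is diagonal with 0 < δ_p ≤ … ≤ δ_1. -/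
/-!
Write `X - μ = A Z` with `A = U Λ^{1/2}`, so that `V = A Aᵀ`. The density of `Z` depends only on
`‖z‖`, so the law of `Z` is invariant under every linear isometry. The spatial sign commutes with
`U`, hence `S(F) = U M Uᵀ` with `M = E[s(Λ^{1/2} Z) s(Λ^{1/2} Z)ᵀ]`. Reflecting the `k`-th
coordinate of `Z` commutes with `Λ^{1/2}` and negates `M k l` for `l ≠ k`, so `M` is diagonal;
`M k k > 0` because `Z k ≠ 0` almost surely; and averaging over the swap of the coordinates `i`
and `j` of `Z` reduces `M j j ≤ M i i` to an elementary inequality between fractions that holds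
when `λ j ≤ λ i`.
-/

open MeasureTheory Matrix Real

/-- The spatial sign s(x) = x/‖x‖ for x ≠ 0, and s(0) = 0. -/
noncomputable def ssign {p : ℕ} (x : EuclideanSpace ℝ (Fin p)) : EuclideanSpace ℝ (Fin p) :=
  haveI := Classical.propDecidable (x = 0)
  if x = 0 then 0 else ‖x‖⁻¹ • x

open scoped ENNReal

section SpatialSign

variable {p : ℕ}

@[simp]
lemma ssign_zero : ssign (0 : EuclideanSpace ℝ (Fin p)) = 0 := if_pos rfl

lemma ssign_of_ne_zero {x : EuclideanSpace ℝ (Fin p)} (hx : x ≠ 0) : ssign x = ‖x‖⁻¹ • x :=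
  if_neg hx

@[fun_prop]
lemma measurable_ssign : Measurable (ssign (p := p)) := by
  classical
  refine Measurable.ite (measurableSet_singleton 0) measurable_const ?_
  fun_prop

lemma norm_ssign_le_one (x : EuclideanSpace ℝ (Fin p)) : ‖ssign x‖ ≤ 1 := by
  rcases eq_or_ne x 0 with rfl | hx
  · simp
  · rw [ssign_of_ne_zero hx, norm_smul, norm_inv, norm_norm,
      inv_mul_cancel₀ (norm_ne_zero_iff.2 hx)]

lemma abs_ssign_apply_le_one (x : EuclideanSpace ℝ (Fin p)) (k : Fin p) : |ssign x k| ≤ 1 :=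
  (PiLp.norm_apply_le (ssign x) k).trans (norm_ssign_le_one x)

lemma ssign_apply_sq (x : EuclideanSpace ℝ (Fin p)) (k : Fin p) :
    ssign x k ^ 2 = x k ^ 2 / ‖x‖ ^ 2 := by
  rcases eq_or_ne x 0 with rfl | hx
  · simp
  · rw [ssign_of_ne_zero hx, PiLp.smul_apply, smul_eq_mul, mul_pow, inv_pow, inv_mul_eq_div]

lemma LinearIsometryEquiv.map_ssign
    (T : EuclideanSpace ℝ (Fin p) ≃ₗᵢ[ℝ] EuclideanSpace ℝ (Fin p)) (x : EuclideanSpace ℝ (Fin p)) :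
    T (ssign x) = ssign (T x) := by
  rcases eq_or_ne x 0 with rfl | hx
  · simp
  · rw [ssign_of_ne_zero hx, ssign_of_ne_zero ((map_ne_zero_iff T T.injective).2 hx),
      T.norm_map, T.map_smul]

end SpatialSign

lemma integral_mulVec_mul_mulVec {α n : Type*} [MeasurableSpace α] [Fintype n] (ν : Measure α)
    (w : α → n → ℝ) (hw : ∀ k l, Integrable (fun a => w a k * w a l) ν) (U : Matrix n n ℝ)
    (i j : n) :
    ∫ a, (U *ᵥ w a) i * (U *ᵥ w a) j ∂ν = (U * of (fun k l => ∫ a, w a k * w a l ∂ν) * Uᵀ) i j := by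
  have hexpand : ∀ a, (U *ᵥ w a) i * (U *ᵥ w a) j = ∑ k, ∑ l, U i k * U j l * (w a k * w a l) :=
    fun a => by simp only [mulVec, dotProduct, Finset.sum_mul_sum]; congr! 2; ring
  simp_rw [hexpand]
  rw [integral_finsetSum _ fun k _ => integrable_finsetSum _ fun l _ => (hw k l).const_mul _]
  simp_rw [integral_finsetSum _ fun l _ => (hw _ l).const_mul _, integral_const_mul, mul_apply,
    Finset.sum_mul, transpose_apply, of_apply]
  rw [Finset.sum_comm]
  congr! 2
  ring

section SignCovariance

variable {p : ℕ}

/-- The spatial sign covariance matrix `S` of a law with location `0`. -/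
noncomputable def signCov (ν : Measure (EuclideanSpace ℝ (Fin p))) : Matrix (Fin p) (Fin p) ℝ :=
  of fun k l => ∫ x, ssign x k * ssign x l ∂ν

variable {α : Type*} [MeasurableSpace α]

lemma integrable_ssign_apply_mul_ssign_apply (ν : Measure α) [IsFiniteMeasure ν]
    {f : α → EuclideanSpace ℝ (Fin p)} (hf : Measurable f) (k l : Fin p) :
    Integrable (fun a => ssign (f a) k * ssign (f a) l) ν := by
  refine .of_bound (by fun_prop) 1 (.of_forall fun a => ?_)
  rw [Real.norm_eq_abs, abs_mul]
  exact mul_le_one₀ (abs_ssign_apply_le_one _ k) (abs_nonneg _) (abs_ssign_apply_le_one _ l)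

lemma signCov_map_apply (ν : Measure α) {f : α → EuclideanSpace ℝ (Fin p)} (hf : Measurable f)
    (k l : Fin p) :
    signCov (ν.map f) k l = ∫ a, ssign (f a) k * ssign (f a) l ∂ν :=
  integral_map hf.aemeasurable (by fun_prop)

lemma signCov_map_toEuclideanCLM_of_mem_orthogonalGroup (ν : Measure (EuclideanSpace ℝ (Fin p)))
    [IsFiniteMeasure ν] {U : Matrix (Fin p) (Fin p) ℝ} (hU : U ∈ orthogonalGroup (Fin p) ℝ) :
    signCov (ν.map (toEuclideanCLM (𝕜 := ℝ) U)) = U * signCov ν * Uᵀ := by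
  let T := Unitary.linearIsometryEquiv ⟨toEuclideanCLM (𝕜 := ℝ) U, Unitary.map_mem _ hU⟩
  ext i j
  rw [signCov_map_apply _ (by fun_prop)]
  have hT : ∀ x, ssign (toEuclideanCLM (𝕜 := ℝ) U x) = toEuclideanCLM (𝕜 := ℝ) U (ssign x) :=
    fun x => (T.map_ssign x).symm
  simp_rw [hT, ofLp_toEuclideanCLM]
  exact integral_mulVec_mul_mulVec ν _
    (integrable_ssign_apply_mul_ssign_apply ν measurable_id) U i j

end SignCovariance

lemma MeasurableEquiv.map_withDensity {α β : Type*} [MeasurableSpace α] [MeasurableSpace β]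
    (e : α ≃ᵐ β) (ν : Measure α) (f : α → ℝ≥0∞) :
    (ν.withDensity f).map e = (ν.map e).withDensity (f ∘ e.symm) := by
  ext s hs
  rw [e.map_apply, withDensity_apply _ (e.measurable hs), withDensity_apply _ hs,
    Measure.restrict_map e.measurable hs, lintegral_map_equiv]
  simp

section AffineChange

variable {E : Type*} [NormedAddCommGroup E] [NormedSpace ℝ E] [MeasurableSpace E] [BorelSpace E]

noncomputable def affineMeasurableEquiv (b : E) (L : E ≃L[ℝ] E) : E ≃ᵐ E :=
  (L.toHomeomorph.trans (Homeomorph.addLeft b)).toMeasurableEquiv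

@[simp]
lemma affineMeasurableEquiv_apply (b : E) (L : E ≃L[ℝ] E) (z : E) :
    affineMeasurableEquiv b L z = b + L z := rfl

lemma exists_map_symm_withDensity_affineMeasurableEquiv [FiniteDimensional ℝ E]
    (ν : Measure E) [ν.IsAddHaarMeasure] (b : E) (L : E ≃L[ℝ] E) (f : E → ℝ≥0∞) :
    ∃ c : ℝ≥0∞, (ν.withDensity f).map (affineMeasurableEquiv b L).symm
      = c • ν.withDensity (f ∘ affineMeasurableEquiv b L) := by
  have hsymm : ⇑(affineMeasurableEquiv b L).symm = L.symm ∘ (fun z => -b + z) := rfl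
  refine ⟨ENNReal.ofReal |(LinearMap.det (L.symm : E →ₗ[ℝ] E))⁻¹|, ?_⟩
  rw [MeasurableEquiv.map_withDensity, MeasurableEquiv.symm_symm, ← withDensity_smul_measure,
    hsymm, ← Measure.map_map L.symm.continuous.measurable (measurable_const_add _),
    map_add_left_eq_self]
  congr
  exact Measure.map_linearMap_addHaar_eq_smul_addHaar ν (f := (L.symm : E →ₗ[ℝ] E))
    (LinearEquiv.isUnit_det' _).ne_zero

end AffineChange

lemma LinearIsometryEquiv.measurePreserving_withDensity_comp_norm {E : Type*}
    [NormedAddCommGroup E] [InnerProductSpace ℝ E] [FiniteDimensional ℝ E] [MeasurableSpace E]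
    [BorelSpace E] (σ : E ≃ₗᵢ[ℝ] E) (φ : ℝ → ℝ≥0∞) :
    MeasurePreserving σ (volume.withDensity (φ ‖·‖)) (volume.withDensity (φ ‖·‖)) := by
  refine ⟨σ.continuous.measurable, ?_⟩
  have h := σ.toHomeomorph.toMeasurableEquiv.map_withDensity volume (φ ‖·‖)
  refine h.trans ?_
  rw [show (volume : Measure E).map σ.toHomeomorph.toMeasurableEquiv = volume from
    σ.measurePreserving.map_eq]
  congr 1
  funext z
  simp

section InvertibleMatrix

variable {n : Type*} [Fintype n] [DecidableEq n]

lemma Matrix.transpose_mul_inv_mul_transpose_mul {A : Matrix n n ℝ} (hA : IsUnit A) :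
    Aᵀ * (A * Aᵀ)⁻¹ * A = 1 := by
  have hdet : IsUnit A.det := (isUnit_iff_isUnit_det A).1 hA
  have hdetT : IsUnit Aᵀ.det := by rwa [det_transpose]
  rw [mul_inv_rev, ← Matrix.mul_assoc, mul_nonsing_inv _ hdetT, Matrix.one_mul,
    nonsing_inv_mul _ hdet]

lemma Matrix.sum_mulVec_mul_inv_mul_mulVec {A : Matrix n n ℝ} (hA : IsUnit A) (z : n → ℝ) :
    ∑ i, ∑ j, (A *ᵥ z) i * (A * Aᵀ)⁻¹ i j * (A *ᵥ z) j = z ⬝ᵥ z := by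
  calc ∑ i, ∑ j, (A *ᵥ z) i * (A * Aᵀ)⁻¹ i j * (A *ᵥ z) j
      = (A *ᵥ z) ⬝ᵥ ((A * Aᵀ)⁻¹ *ᵥ (A *ᵥ z)) := by
        simp only [dotProduct, mulVec, Finset.mul_sum, mul_assoc]
    _ = z ⬝ᵥ ((Aᵀ * (A * Aᵀ)⁻¹ * A) *ᵥ z) := by
        rw [dotProduct_comm, dotProduct_mulVec, ← mulVec_transpose, dotProduct_comm,
          mulVec_mulVec, mulVec_mulVec]
    _ = z ⬝ᵥ z := by rw [transpose_mul_inv_mul_transpose_mul hA, one_mulVec]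

noncomputable def Matrix.toEuclideanCLE {A : Matrix n n ℝ} (hA : IsUnit A) :
    EuclideanSpace ℝ n ≃L[ℝ] EuclideanSpace ℝ n :=
  ContinuousLinearEquiv.unitsEquiv ℝ _ (hA.map (toEuclideanCLM (n := n) (𝕜 := ℝ))).unit

@[simp]
lemma Matrix.toEuclideanCLE_apply {A : Matrix n n ℝ} (hA : IsUnit A) (z : EuclideanSpace ℝ n) :
    toEuclideanCLE hA z = toEuclideanCLM (𝕜 := ℝ) A z := rfl

end InvertibleMatrix

lemma exists_spherical_of_elliptical {n : Type*} [Fintype n] [DecidableEq n]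
    (μ : EuclideanSpace ℝ n) {A : Matrix n n ℝ} (hA : IsUnit A) (h : ℝ → ℝ≥0∞)
    (F : Measure (EuclideanSpace ℝ n)) [IsProbabilityMeasure F]
    (hF : F = volume.withDensity fun x =>
      h (∑ i, ∑ j, (x i - μ i) * (A * Aᵀ)⁻¹ i j * (x j - μ j))) :
    ∃ G : Measure (EuclideanSpace ℝ n), IsProbabilityMeasure G ∧ G ≪ volume ∧
      (∀ σ : EuclideanSpace ℝ n ≃ₗᵢ[ℝ] EuclideanSpace ℝ n, MeasurePreserving σ G G) ∧
      F.map (· - μ) = G.map (toEuclideanCLM (𝕜 := ℝ) A) := by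
  set Φ := affineMeasurableEquiv μ (toEuclideanCLE hA)
  obtain ⟨a, ha⟩ := exists_map_symm_withDensity_affineMeasurableEquiv volume μ (toEuclideanCLE hA)
    fun x => h (∑ i, ∑ j, (x i - μ i) * (A * Aᵀ)⁻¹ i j * (x j - μ j))
  have hradial : (fun x => h (∑ i, ∑ j, (x i - μ i) * (A * Aᵀ)⁻¹ i j * (x j - μ j))) ∘ Φ
      = fun z => h (‖z‖ ^ 2) := by
    funext z
    rw [Function.comp_apply, EuclideanSpace.real_norm_sq_eq]
    simp [Φ, sum_mulVec_mul_inv_mul_mulVec hA, dotProduct, sq]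
  rw [← hF, hradial] at ha
  refine ⟨F.map Φ.symm, Measure.isProbabilityMeasure_map Φ.symm.measurable.aemeasurable, ?_,
    fun σ => ?_, ?_⟩
  · rw [ha]
    exact (withDensity_absolutelyContinuous _ _).smul_left a
  · rw [ha]
    exact (σ.measurePreserving_withDensity_comp_norm fun r => h (r ^ 2)).smul_measure a
  rw [Measure.map_map (by fun_prop) Φ.symm.measurable]
  congr 1
  funext x
  exact (eq_sub_of_add_eq' (Φ.apply_symm_apply x)).symm

lemma volume_setOf_apply_eq_zero {ι : Type*} [Fintype ι] (k : ι) :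
    volume {z : EuclideanSpace ℝ ι | z k = 0} = 0 := by
  classical
  have hker : {z : EuclideanSpace ℝ ι | z k = 0}
      = ↑(LinearMap.ker (EuclideanSpace.proj (𝕜 := ℝ) k : EuclideanSpace ℝ ι →ₗ[ℝ] ℝ)) := by
    ext; simp
  rw [hker]
  refine Measure.addHaar_submodule _ _ fun htop => ?_
  have := LinearMap.ker_eq_top.1 htop
  simpa using congr($this (EuclideanSpace.single k 1))

lemma toEuclideanCLM_diagonal_apply {ι : Type*} [Fintype ι] [DecidableEq ι] (d : ι → ℝ)
    (z : EuclideanSpace ℝ ι) (k : ι) :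
    toEuclideanCLM (𝕜 := ℝ) (diagonal d) z k = d k * z k := by
  simp [mulVec_diagonal]

lemma div_add_div_le_div_add_div {α β A B R : ℝ} (hβ : 0 < β) (hβα : β ≤ α) (hA : 0 ≤ A)
    (hB : 0 ≤ B) (hR : 0 ≤ R) :
    β * B / (α * A + β * B + R) + β * A / (α * B + β * A + R)
      ≤ α * A / (α * A + β * B + R) + α * B / (α * B + β * A + R) := by
  have hα : 0 < α := hβ.trans_le hβα
  rcases (show 0 ≤ α * A + β * B + R by positivity).eq_or_lt with hN | hN
  · obtain ⟨rfl, rfl, rfl⟩ : A = 0 ∧ B = 0 ∧ R = 0 :=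
      ⟨by nlinarith [mul_nonneg hβ.le hB], by nlinarith [mul_nonneg hα.le hA],
        by nlinarith [mul_nonneg hα.le hA, mul_nonneg hβ.le hB]⟩
    simp
  have hN' : 0 < α * B + β * A + R := by
    nlinarith [mul_nonneg (mul_nonneg hα.le hA) (sub_nonneg.2 hβα),
      mul_nonneg (mul_nonneg (add_nonneg hα.le hβ.le) hB) (sub_nonneg.2 hβα),
      mul_nonneg hR (sub_nonneg.2 hβα)]
  rw [div_add_div _ _ hN.ne' hN'.ne', div_add_div _ _ hN.ne' hN'.ne',
    div_le_div_iff_of_pos_right (mul_pos hN hN')]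
  nlinarith [mul_nonneg (mul_nonneg hR (sub_nonneg.2 hβα)) (add_nonneg hA hB),
    mul_nonneg (mul_nonneg hA hB) (mul_nonneg (sub_nonneg.2 hβα) (add_nonneg hα.le hβ.le))]

section SphericalLaw

variable {p : ℕ} {G : Measure (EuclideanSpace ℝ (Fin p))} {d : Fin p → ℝ}

lemma signCov_map_diagonal_eq_diagonal [IsFiniteMeasure G]
    (hG : ∀ σ : EuclideanSpace ℝ (Fin p) ≃ₗᵢ[ℝ] EuclideanSpace ℝ (Fin p), MeasurePreserving σ G G) :
    signCov (G.map (toEuclideanCLM (𝕜 := ℝ) (diagonal d)))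
      = diagonal fun k => signCov (G.map (toEuclideanCLM (𝕜 := ℝ) (diagonal d))) k k := by
  ext k l
  rcases eq_or_ne k l with rfl | hkl
  · simp
  rw [diagonal_apply_ne _ hkl]
  set D := toEuclideanCLM (𝕜 := ℝ) (diagonal d)
  -- the reflection `z k ↦ -z k` commutes with `D` and changes the sign of the integrand
  let σ : EuclideanSpace ℝ (Fin p) ≃ₗᵢ[ℝ] EuclideanSpace ℝ (Fin p) :=
    LinearIsometryEquiv.piLpCongrRight 2 fun m =>
      if m = k then LinearIsometryEquiv.neg ℝ else LinearIsometryEquiv.refl ℝ ℝ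
  have hσ : ∀ v m, σ v m = if m = k then -v m else v m := by
    intro v m
    by_cases hm : m = k <;> simp [σ, hm]
  have hDσ : ∀ z, D (σ z) = σ (D z) := by
    intro z
    ext m
    simp only [D, toEuclideanCLM_diagonal_apply, hσ]
    split_ifs <;> ring
  have hflip : ∀ z, ssign (D (σ z)) k * ssign (D (σ z)) l = -(ssign (D z) k * ssign (D z) l) := by
    intro z
    rw [hDσ, ← σ.map_ssign]
    simp [hσ, hkl.symm]
  have h := (hG σ).integral_comp σ.toHomeomorph.measurableEmbedding
    fun z => ssign (D z) k * ssign (D z) l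
  simp only [hflip, integral_neg] at h
  rw [signCov_map_apply _ (by fun_prop)]
  linarith

lemma signCov_map_diagonal_apply_self_pos [IsProbabilityMeasure G] (hG : G ≪ volume) {k : Fin p}
    (hd : d k ≠ 0) : 0 < signCov (G.map (toEuclideanCLM (𝕜 := ℝ) (diagonal d))) k k := by
  rw [signCov_map_apply _ (by fun_prop), integral_pos_iff_support_of_nonneg
    (fun z => mul_self_nonneg _) (integrable_ssign_apply_mul_ssign_apply G (by fun_prop) k k)]
  have hnull : G {z | z k = 0} = 0 := hG (volume_setOf_apply_eq_zero k)
  have hsupp : {z : EuclideanSpace ℝ (Fin p) | z k = 0}ᶜ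
      ⊆ Function.support fun z => ssign (toEuclideanCLM (𝕜 := ℝ) (diagonal d) z) k
        * ssign (toEuclideanCLM (𝕜 := ℝ) (diagonal d) z) k := by
    intro z hz
    have hDz : toEuclideanCLM (𝕜 := ℝ) (diagonal d) z k ≠ 0 := by
      rw [toEuclideanCLM_diagonal_apply]
      exact mul_ne_zero hd hz
    have hsq := ssign_apply_sq (toEuclideanCLM (𝕜 := ℝ) (diagonal d) z) k
    have hDz0 : toEuclideanCLM (𝕜 := ℝ) (diagonal d) z ≠ 0 := fun h => hDz (by simp [h])
    simp only [Function.mem_support, ← sq, hsq]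
    exact div_ne_zero (pow_ne_zero 2 hDz) (pow_ne_zero 2 (norm_ne_zero_iff.2 hDz0))
  calc (0 : ℝ≥0∞) < G {z | z k = 0}ᶜ := by
        rw [(prob_compl_eq_one_iff₀ (.of_null hnull)).2 hnull]
        exact one_pos
    _ ≤ _ := measure_mono hsupp

lemma ssign_diagonal_sq_add_le_of_swap {i j : Fin p} (hdj : 0 < d j) (hij : i ≠ j)
    (hdij : d j ≤ d i) {z w : EuclideanSpace ℝ (Fin p)} (hwi : w i = z j) (hwj : w j = z i)
    (hw : ∀ m, m ≠ i → m ≠ j → w m = z m) :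
    ssign (toEuclideanCLM (𝕜 := ℝ) (diagonal d) z) j ^ 2
        + ssign (toEuclideanCLM (𝕜 := ℝ) (diagonal d) w) j ^ 2
      ≤ ssign (toEuclideanCLM (𝕜 := ℝ) (diagonal d) z) i ^ 2
        + ssign (toEuclideanCLM (𝕜 := ℝ) (diagonal d) w) i ^ 2 := by
  have hnorm : ∀ v, ‖toEuclideanCLM (𝕜 := ℝ) (diagonal d) v‖ ^ 2 = ∑ m, d m ^ 2 * v m ^ 2 := by
    intro v
    simp [EuclideanSpace.real_norm_sq_eq, toEuclideanCLM_diagonal_apply, mul_pow]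
  have hsplit : ∀ f : Fin p → ℝ, ∑ m, f m = f i + f j + ∑ m ∈ {i, j}ᶜ, f m := fun f => by
    rw [← Finset.sum_add_sum_compl {i, j}, Finset.sum_pair hij]
  have hrest : ∑ m ∈ {i, j}ᶜ, d m ^ 2 * w m ^ 2 = ∑ m ∈ {i, j}ᶜ, d m ^ 2 * z m ^ 2 := by
    refine Finset.sum_congr rfl fun m hm => ?_
    simp only [Finset.mem_compl, Finset.mem_insert, Finset.mem_singleton, not_or] at hm
    rw [hw m hm.1 hm.2]
  simp only [ssign_apply_sq, hnorm, toEuclideanCLM_diagonal_apply, mul_pow]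
  rw [hsplit, hsplit fun m => d m ^ 2 * w m ^ 2, hrest, hwi, hwj]
  exact div_add_div_le_div_add_div (pow_pos hdj 2) (pow_le_pow_left₀ hdj.le hdij 2)
    (sq_nonneg _) (sq_nonneg _)
    (Finset.sum_nonneg fun m _ => by positivity)

lemma signCov_map_diagonal_apply_self_le [IsFiniteMeasure G]
    (hG : ∀ σ : EuclideanSpace ℝ (Fin p) ≃ₗᵢ[ℝ] EuclideanSpace ℝ (Fin p), MeasurePreserving σ G G)
    {i j : Fin p} (hdj : 0 < d j) (hdij : d j ≤ d i) :
    signCov (G.map (toEuclideanCLM (𝕜 := ℝ) (diagonal d))) j j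
      ≤ signCov (G.map (toEuclideanCLM (𝕜 := ℝ) (diagonal d))) i i := by
  rcases eq_or_ne i j with rfl | hij
  · rfl
  set D := toEuclideanCLM (𝕜 := ℝ) (diagonal d)
  let σ : EuclideanSpace ℝ (Fin p) ≃ₗᵢ[ℝ] EuclideanSpace ℝ (Fin p) :=
    LinearIsometryEquiv.piLpCongrLeft 2 ℝ ℝ (Equiv.swap i j)
  have hσ : ∀ v m, σ v m = v (Equiv.swap i j m) := by
    simp [σ, LinearIsometryEquiv.piLpCongrLeft_apply, Equiv.piCongrLeft'_apply]
  have hpoint : ∀ z, ssign (D z) j ^ 2 + ssign (D (σ z)) j ^ 2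
      ≤ ssign (D z) i ^ 2 + ssign (D (σ z)) i ^ 2 := fun z =>
    ssign_diagonal_sq_add_le_of_swap hdj hij hdij (by simp [hσ]) (by simp [hσ])
      fun m hi hj => by rw [hσ, Equiv.swap_apply_of_ne_of_ne hi hj]
  have hint : ∀ m, Integrable (fun z => ssign (D z) m ^ 2) G := fun m => by
    simpa only [sq] using integrable_ssign_apply_mul_ssign_apply G D.continuous.measurable m m
  have hintσ : ∀ m, Integrable (fun z => ssign (D (σ z)) m ^ 2) G := fun m =>
    (hG σ).integrable_comp_of_integrable (hint m)
  have hswap : ∀ m, ∫ z, ssign (D (σ z)) m ^ 2 ∂G = ∫ z, ssign (D z) m ^ 2 ∂G := fun m =>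
    (hG σ).integral_comp σ.toHomeomorph.measurableEmbedding fun z => ssign (D z) m ^ 2
  have h := integral_mono ((hint j).add (hintσ j)) ((hint i).add (hintσ i)) hpoint
  rw [integral_add' (hint j) (hintσ j), integral_add' (hint i) (hintσ i), hswap, hswap] at h
  simp only [signCov_map_apply _ D.continuous.measurable, ← sq]
  linarith

end SphericalLaw

theorem sscm_eigendecomposition_general
    {p : ℕ}
    (μ : EuclideanSpace ℝ (Fin p)) (V : Matrix (Fin p) (Fin p) ℝ)
    (g : ℝ → ℝ)
    (F : Measure (EuclideanSpace ℝ (Fin p))) [IsProbabilityMeasure F]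
    (hF : F = volume.withDensity fun x => ENNReal.ofReal
        ((Real.sqrt V.det)⁻¹ * g (∑ i, ∑ j, (x i - μ i) * V⁻¹ i j * (x j - μ j))))
    (U : Matrix (Fin p) (Fin p) ℝ) (hU : U * Uᵀ = 1)
    (lam : Fin p → ℝ) (hpos : ∀ i, 0 < lam i)
    (hmono : ∀ i j : Fin p, i ≤ j → lam j ≤ lam i)
    (hVdec : V = U * Matrix.diagonal lam * Uᵀ) :
    ∃ δ : Fin p → ℝ, (∀ i, 0 < δ i) ∧ (∀ i j : Fin p, i ≤ j → δ j ≤ δ i) ∧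
      (Matrix.of fun i j => ∫ x, ssign (x - μ) i * ssign (x - μ) j ∂F)
        = U * Matrix.diagonal δ * Uᵀ := by
  set d : Fin p → ℝ := fun k => √(lam k)
  have hd : ∀ k, 0 < d k := fun k => Real.sqrt_pos.2 (hpos k)
  have hUo : U ∈ orthogonalGroup (Fin p) ℝ := (mem_orthogonalGroup_iff _ _).2 hU
  have hA : IsUnit (U * diagonal d) :=
    (Unitary.isUnit_coe (U := ⟨U, hUo⟩)).mul
      (isUnit_diagonal.2 (Pi.isUnit_iff.2 fun k => (hd k).ne'.isUnit))
  have hV : V = U * diagonal d * (U * diagonal d)ᵀ := by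
    rw [hVdec, transpose_mul, diagonal_transpose, Matrix.mul_assoc, Matrix.mul_assoc,
      ← Matrix.mul_assoc (diagonal d), diagonal_mul_diagonal]
    congr 3
    funext k
    exact (Real.mul_self_sqrt (hpos k).le).symm
  obtain ⟨G, _, hGac, hGsph, hFG⟩ := exists_spherical_of_elliptical μ hA
    (fun t => ENNReal.ofReal ((√V.det)⁻¹ * g t)) F (by rw [← hV]; exact hF)
  rw [map_mul, ContinuousLinearMap.mul_def, ContinuousLinearMap.coe_comp,
    ← Measure.map_map (by fun_prop) (by fun_prop)] at hFG
  refine ⟨fun k => signCov (G.map (toEuclideanCLM (𝕜 := ℝ) (diagonal d))) k k,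
    fun k => signCov_map_diagonal_apply_self_pos hGac (hd k).ne',
    fun i j hij => signCov_map_diagonal_apply_self_le hGsph (hd j)
      (Real.sqrt_le_sqrt (hmono i j hij)),
    ?_⟩
  have hS : (of fun i j => ∫ x, ssign (x - μ) i * ssign (x - μ) j ∂F)
      = signCov (F.map (· - μ)) := by
    ext i j
    exact (signCov_map_apply F (by fun_prop) i j).symm
  rw [hS, hFG, signCov_map_toEuclideanCLM_of_mem_orthogonalGroup _ hUo,
    ← signCov_map_diagonal_eq_diagonal hGsph]

/-- Let p ≥ 2 and let F ∈ E_p(μ,V) be an elliptical distribution with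
eigenvalue decomposition V = U Λ Uᵀ, U orthogonal, Λ = diag(λ₁,…,λ_p),
0 < λ_p ≤ … ≤ λ₁.  Then the spatial sign covariance matrix
S(F) = E[s(X−μ) s(X−μ)ᵀ] satisfies S(F) = U Δ Uᵀ with Δ = diag(δ₁,…,δ_p) diagonal and
0 < δ_p ≤ … ≤ δ₁ (the order of the eigenvalues is preserved). -/
theorem sscm_eigendecomposition
    {p : ℕ} (hp : 2 ≤ p)
    (μ : EuclideanSpace ℝ (Fin p)) (V : Matrix (Fin p) (Fin p) ℝ) (hV : V.PosDef)
    (g : ℝ → ℝ) (hg : ∀ t, 0 ≤ t → 0 ≤ g t)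
    (F : Measure (EuclideanSpace ℝ (Fin p))) [IsProbabilityMeasure F]
    (hF : F = volume.withDensity fun x => ENNReal.ofReal
        ((Real.sqrt V.det)⁻¹ * g (∑ i, ∑ j, (x i - μ i) * V⁻¹ i j * (x j - μ j))))
    (U : Matrix (Fin p) (Fin p) ℝ) (hU : U * Uᵀ = 1)
    (lam : Fin p → ℝ) (hpos : ∀ i, 0 < lam i)
    (hmono : ∀ i j : Fin p, i ≤ j → lam j ≤ lam i)
    (hVdec : V = U * Matrix.diagonal lam * Uᵀ) :
    ∃ δ : Fin p → ℝ, (∀ i, 0 < δ i) ∧ (∀ i j : Fin p, i ≤ j → δ j ≤ δ i) ∧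
      (Matrix.of fun i j => ∫ x, ssign (x - μ) i * ssign (x - μ) j ∂F)
        = U * Matrix.diagonal δ * Uᵀ :=
  sscm_eigendecomposition_general μ V g F hF U hU lam hpos hmono hVdec
end

section
/- For all real numbers λ_1 > λ_2 > 0, ∫_0^{2π} λ_1² cos⁴(α) / (λ_1 cos²(α) + λ_2 sin²(α))² dα = 2π (λ_1² − (1/2) √(λ_1 λ_2) (3λ_1 − λ_2)) / (λ_1 − λ_2)². -/
/-!
With `D = a cos² + b sin²` one has `cos² = (D - b) / (a - b)`, so `a² cos⁴ / D²` splits into a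
constant, a multiple of `1 / D` and a multiple of `(a cos² - b sin²) / D² = (sin cos / D)'`.
The last term integrates to zero over a period, and `∫₀^{2π} 1 / D = 2π / √(ab)`.
-/

open MeasureTheory Real

theorem mul_cos_sq_add_mul_sin_sq_pos {a b : ℝ} (ha : 0 < a) (hb : 0 < b) (x : ℝ) :
    0 < a * cos x ^ 2 + b * sin x ^ 2 := by
  rcases le_total a b with hab | hab <;>
    nlinarith [sin_sq_add_cos_sq x, sq_nonneg (sin x), sq_nonneg (cos x)]

theorem hasDerivAt_sin_mul_cos_div {a b x : ℝ} (hx : a * cos x ^ 2 + b * sin x ^ 2 ≠ 0) :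
    HasDerivAt (fun x => sin x * cos x / (a * cos x ^ 2 + b * sin x ^ 2))
      ((a * cos x ^ 2 - b * sin x ^ 2) / (a * cos x ^ 2 + b * sin x ^ 2) ^ 2) x := by
  refine (((hasDerivAt_sin x).mul (hasDerivAt_cos x)).div
    ((((hasDerivAt_cos x).pow 2).const_mul a).add
      (((hasDerivAt_sin x).pow 2).const_mul b)) hx).congr_deriv ?_
  simp only [Pi.add_apply, Pi.mul_apply, Pi.pow_apply]
  congr 1
  linear_combination (a * cos x ^ 2 - b * sin x ^ 2) * sin_sq_add_cos_sq x

/-- For `r = √(ab)`, this is `arctan (√(b/a) tan x)` corrected by multiples of `π` so as to be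
smooth on all of `ℝ`. -/
theorem hasDerivAt_add_arctan {a b r x : ℝ} (ha : 0 < a) (hr : 0 < r) (hrab : r ^ 2 = a * b) :
    HasDerivAt (fun x => x + arctan ((r - a) * (sin x * cos x) / (a * cos x ^ 2 + r * sin x ^ 2)))
      (r / (a * cos x ^ 2 + b * sin x ^ 2)) x := by
  have hb : 0 < b := by nlinarith
  have hQ := mul_cos_sq_add_mul_sin_sq_pos ha hr x
  have hD := mul_cos_sq_add_mul_sin_sq_pos ha hb x
  refine ((hasDerivAt_id x).add
    ((((hasDerivAt_sin x).mul (hasDerivAt_cos x)).const_mul (r - a)).div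
    ((((hasDerivAt_cos x).pow 2).const_mul a).add (((hasDerivAt_sin x).pow 2).const_mul r))
      hQ.ne').arctan).congr_deriv ?_
  simp only [Pi.add_apply, Pi.div_apply, Pi.mul_apply, Pi.pow_apply]
  -- the key identity is `(a cos² + r sin²)² + ((r - a) sin cos)² = a (a cos² + b sin²)`
  field_simp
  rw [eq_div_iff (ne_of_gt (by linarith))]
  linear_combination ((a * cos x ^ 2 + b * sin x ^ 2) * a * r * (sin x ^ 2 + cos x ^ 2 + 1)
    - r * (a ^ 2 * cos x ^ 2 + r ^ 2 * sin x ^ 2)) * sin_sq_add_cos_sq x - r * sin x ^ 2 * hrab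

theorem integral_one_div_mul_cos_sq_add_mul_sin_sq {a b : ℝ} (ha : 0 < a) (hb : 0 < b) :
    ∫ x in (0 : ℝ)..2 * π, 1 / (a * cos x ^ 2 + b * sin x ^ 2) = 2 * π / √(a * b) := by
  set r := √(a * b)
  have hr : 0 < r := sqrt_pos.mpr (mul_pos ha hb)
  have hrab : r ^ 2 = a * b := sq_sqrt (mul_pos ha hb).le
  have hD x : a * cos x ^ 2 + b * sin x ^ 2 ≠ 0 := (mul_cos_sq_add_mul_sin_sq_pos ha hb x).ne'
  have h : ∫ x in (0 : ℝ)..2 * π, r * (1 / (a * cos x ^ 2 + b * sin x ^ 2)) = 2 * π := by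
    simp_rw [mul_one_div]
    rw [intervalIntegral.integral_eq_sub_of_hasDerivAt
      (fun x _ => hasDerivAt_add_arctan ha hr hrab)
      (Continuous.intervalIntegrable (by fun_prop (disch := exact hD)) _ _)]
    simp
  rw [intervalIntegral.integral_const_mul] at h
  rw [eq_div_iff hr.ne', mul_comm, h]

theorem integral_mul_cos_sq_sub_mul_sin_sq_div_sq {a b : ℝ} (ha : 0 < a) (hb : 0 < b) :
    ∫ x in (0 : ℝ)..2 * π,
      (a * cos x ^ 2 - b * sin x ^ 2) / (a * cos x ^ 2 + b * sin x ^ 2) ^ 2 = 0 := by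
  have hD x : a * cos x ^ 2 + b * sin x ^ 2 ≠ 0 := (mul_cos_sq_add_mul_sin_sq_pos ha hb x).ne'
  rw [intervalIntegral.integral_eq_sub_of_hasDerivAt
    (fun x _ => hasDerivAt_sin_mul_cos_div (hD x))
    (Continuous.intervalIntegrable
      (by fun_prop (disch := exact fun x => pow_ne_zero 2 (hD x))) _ _)]
  simp

theorem sq_mul_cos_pow_four_div_sq_eq {a b x : ℝ} (hab : a ≠ b)
    (hD : a * cos x ^ 2 + b * sin x ^ 2 ≠ 0) :
    a ^ 2 * cos x ^ 4 / (a * cos x ^ 2 + b * sin x ^ 2) ^ 2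
      = a ^ 2 / (a - b) ^ 2
        - a * b * (3 * a - b) / (2 * (a - b) ^ 2) * (1 / (a * cos x ^ 2 + b * sin x ^ 2))
        - a * b / (2 * (a - b))
          * ((a * cos x ^ 2 - b * sin x ^ 2) / (a * cos x ^ 2 + b * sin x ^ 2) ^ 2) := by
  have hab' : a - b ≠ 0 := sub_ne_zero.mpr hab
  field_simp
  linear_combination (2 * a ^ 2 * b ^ 2 * cos x ^ 2 - 2 * a ^ 2 * b ^ 2 * sin x ^ 2
    - 4 * a ^ 3 * b * cos x ^ 2) * sin_sq_add_cos_sq x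

/-- For λ₁ > λ₂ > 0,
∫₀^{2π} λ₁² cos⁴α / (λ₁ cos²α + λ₂ sin²α)² dα
  = 2π (λ₁² − ½ √(λ₁λ₂) (3λ₁ − λ₂)) / (λ₁ − λ₂)². -/
theorem sscm_angular_integral_fourth_power (l₁ l₂ : ℝ) (h₂ : 0 < l₂) (h₁₂ : l₂ < l₁) :
    ∫ α in (0 : ℝ)..(2 * π),
        l₁ ^ 2 * Real.cos α ^ 4 / (l₁ * Real.cos α ^ 2 + l₂ * Real.sin α ^ 2) ^ 2
      = 2 * π * (l₁ ^ 2 - (1 / 2) * Real.sqrt (l₁ * l₂) * (3 * l₁ - l₂)) / (l₁ - l₂) ^ 2 := by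
  have h₁ : 0 < l₁ := h₂.trans h₁₂
  have hD x : l₁ * cos x ^ 2 + l₂ * sin x ^ 2 ≠ 0 := (mul_cos_sq_add_mul_sin_sq_pos h₁ h₂ x).ne'
  have hInv : IntervalIntegrable (fun x => 1 / (l₁ * cos x ^ 2 + l₂ * sin x ^ 2)) volume 0 (2 * π) :=
    Continuous.intervalIntegrable (by fun_prop (disch := exact hD)) _ _
  have hDeriv : IntervalIntegrable (fun x =>
      (l₁ * cos x ^ 2 - l₂ * sin x ^ 2) / (l₁ * cos x ^ 2 + l₂ * sin x ^ 2) ^ 2) volume 0 (2 * π) :=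
    Continuous.intervalIntegrable (by fun_prop (disch := exact fun x => pow_ne_zero 2 (hD x))) _ _
  rw [intervalIntegral.integral_congr fun x _ => sq_mul_cos_pow_four_div_sq_eq h₁₂.ne' (hD x),
    intervalIntegral.integral_sub (intervalIntegrable_const.sub (hInv.const_mul _))
      (hDeriv.const_mul _), intervalIntegral.integral_sub intervalIntegrable_const (hInv.const_mul _),
    intervalIntegral.integral_const, intervalIntegral.integral_const_mul,
    intervalIntegral.integral_const_mul, integral_one_div_mul_cos_sq_add_mul_sin_sq h₁ h₂,
    integral_mul_cos_sq_sub_mul_sin_sq_div_sq h₁ h₂]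
  set r := √(l₁ * l₂)
  have hrab : l₁ * l₂ = r ^ 2 := (sq_sqrt (mul_pos h₁ h₂).le).symm
  have hl : l₁ - l₂ ≠ 0 := (sub_pos.mpr h₁₂).ne'
  rw [hrab, sub_zero, smul_eq_mul, mul_zero, sub_zero]
  field_simp
end

section
/- Let a > 0 and ρ ∈ (−1,1) with (a,ρ) ≠ (1,0), let V_0 be the 2×2 matrix with rows (a, ρ) and (ρ, 1/a), and let S = V_0^{1/2} / trace(V_0^{1/2}) be the spatial sign covariance matrix of a bivariate elliptical distribution with shape V_0 (here V_0^{1/2} is the positive definite matrix square root). Denote the entries of S by s_{11}, s_{12}. For a symmetric 2×2 matrix with entries m_{11}, m_{12} define ρ̂(m_{11}, m_{12}) = c m_{12} b / √((m_{12}² + b²)² + (m_{12} c b)²), where d = 1/2 + √((m_{11} − 1/2)² + m_{12}²), b = d − m_{11}, c = (2d − 1)/(d(1 − d)). For x = (x_1, x_2) ∈ ℝ², x ≠ 0, let S_ε = (1−ε) S + ε x x^T/(x^T x) with entries s_{11}(ε), s_{12}(ε). Then the function ε ↦ ρ̂(s_{11}(ε), s_{12}(ε)) is differentiable at ε = 0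 with derivative equal to [ −{ (a²+1) ρ √(1−ρ²) + 2 a ρ (1−ρ²) } (a² x_2² + x_1²) − { (a⁴ + 6a² + 1)(ρ² − 1) + 2a(a²+1) √(1−ρ²) (ρ² − 2) } x_1 x_2 ] / [ { 2 a² √(1−ρ²) + a(a²+1) } (x_1² + x_2²) ]. -/
/-!
For a trace-one symmetric matrix with first row `(m₁₁, m₁₂)` and determinant
`δ = m₁₁ (1 - m₁₁) - m₁₂² > 0`, put `w = √((m₁₁ - 1/2)² + m₁₂²)`. Then `d (1 - d) = δ` and
`m₁₂² + b² = 2 w b`, so the expression defining `ρ̂` collapses to `ρ̂ = m₁₂ / √(δ² + m₁₂²)`.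
Positivity of `δ` is an open condition, so near the SSCM this closed form may be differentiated
instead.

By Cayley–Hamilton, the positive definite square root `R` of `V₀` satisfies
`tr R • R = V₀ + √(det V₀) • 1` and `(tr R)² = tr V₀ + 2 √(det V₀)`. With `q = √(1 - ρ²)` and
`t = a + 1/a + 2q` this gives `s₁₁ = (a + q)/t`, `s₁₂ = ρ/t` and `δ = q/t`, hence
`√(δ² + s₁₂²) = 1/t`, and the chain rule gives the influence function.
-/

open Matrix Real

/-- The spatial sign correlation read off from the entries m₁₁, m₁₂ of a (2×2, symmetric)
matrix: ρ̂ = c m₁₂ b / √((m₁₂² + b²)² + (m₁₂ c b)²), where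
d = 1/2 + √((m₁₁ − 1/2)² + m₁₂²), b = d − m₁₁, c = (2d − 1)/(d(1 − d)). -/
noncomputable def rhoFromS (m₁₁ m₁₂ : ℝ) : ℝ :=
  let d := 1 / 2 + Real.sqrt ((m₁₁ - 1 / 2) ^ 2 + m₁₂ ^ 2)
  let b := d - m₁₁
  let c := (2 * d - 1) / (d * (1 - d))
  c * m₁₂ * b / Real.sqrt ((m₁₂ ^ 2 + b ^ 2) ^ 2 + (m₁₂ * c * b) ^ 2)

theorem Matrix.mul_self_fin_two {α : Type*} [CommRing α] (R : Matrix (Fin 2) (Fin 2) α) :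
    R * R = R.trace • R - R.det • 1 := by
  ext i j
  fin_cases i <;> fin_cases j <;> simp [mul_apply, trace_fin_two, det_fin_two] <;> ring

theorem Matrix.PosDef.inv_trace_smul_eq_of_mul_self_eq {R V : Matrix (Fin 2) (Fin 2) ℝ}
    (hR : R.PosDef) (hRV : R * R = V) :
    (R.trace)⁻¹ • R = (V.trace + 2 * √V.det)⁻¹ • (V + √V.det • 1) := by
  have hdet : R.det = √V.det := by
    rw [← hRV, det_mul, ← sq, sqrt_sq hR.det_pos.le]
  have htrace : R.trace ^ 2 = V.trace + 2 * R.det := by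
    have h := congrArg trace R.mul_self_fin_two
    rw [hRV] at h
    simp [trace_sub, trace_smul, trace_one] at h
    linear_combination -h
  have hsmul : R.trace • R = V + R.det • 1 := by
    rw [← hRV, R.mul_self_fin_two, sub_add_cancel]
  rw [← hdet, ← htrace, ← hsmul, smul_smul, pow_two, mul_inv,
    inv_mul_cancel_right₀ hR.trace_pos.ne']

theorem inv_trace_smul_eq_of_mul_self_eq_shape {a ρ : ℝ} (ha : a ≠ 0)
    {R : Matrix (Fin 2) (Fin 2) ℝ} (hR : R.PosDef) (hRsq : R * R = !![a, ρ; ρ, a⁻¹]) :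
    (R.trace)⁻¹ • R = (a + a⁻¹ + 2 * √(1 - ρ ^ 2))⁻¹ •
      !![a + √(1 - ρ ^ 2), ρ; ρ, a⁻¹ + √(1 - ρ ^ 2)] := by
  have hdet : (!![a, ρ; ρ, a⁻¹]).det = 1 - ρ ^ 2 := by
    rw [det_fin_two_of, mul_inv_cancel₀ ha, sq]
  rw [hR.inv_trace_smul_eq_of_mul_self_eq hRsq, hdet, trace_fin_two_of]
  ext i j
  fin_cases i <;> fin_cases j <;> simp

theorem HasDerivAt.div_sqrt_sq_add_sq {y z : ℝ → ℝ} {y' z' x : ℝ} (hy : HasDerivAt y y' x)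
    (hz : HasDerivAt z z' x) (h : z x ^ 2 + y x ^ 2 ≠ 0) :
    HasDerivAt (fun t ↦ y t / √(z t ^ 2 + y t ^ 2))
      (z x * (z x * y' - y x * z') / ((z x ^ 2 + y x ^ 2) * √(z x ^ 2 + y x ^ 2))) x := by
  have hN : 0 < √(z x ^ 2 + y x ^ 2) := sqrt_pos.2 (by positivity)
  refine (hy.div (((hz.pow 2).add (hy.pow 2)).sqrt h) hN.ne').congr_deriv ?_
  simp only [Pi.add_apply, Pi.pow_apply]
  field_simp
  rw [sq_sqrt (by positivity)]
  ring

theorem hasDerivAt_one_sub_mul_add_mul (s p x : ℝ) :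
    HasDerivAt (fun ε : ℝ ↦ (1 - ε) * s + ε * p) (p - s) x := by
  have h : ⇑(AffineMap.lineMap s p : ℝ →ᵃ[ℝ] ℝ) = fun ε ↦ (1 - ε) * s + ε * p :=
    funext (AffineMap.lineMap_apply_ring s p)
  exact h ▸ AffineMap.hasDerivAt_lineMap

/-- The determinant of `!![m₁₁, m₁₂; m₁₂, 1 - m₁₁]`: an SSCM has trace one. -/
def sscmDet (m₁₁ m₁₂ : ℝ) : ℝ := m₁₁ * (1 - m₁₁) - m₁₂ ^ 2

theorem rhoFromS_eq {m₁₁ m₁₂ : ℝ} (h : 0 < sscmDet m₁₁ m₁₂) :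
    rhoFromS m₁₁ m₁₂ = m₁₂ / √(sscmDet m₁₁ m₁₂ ^ 2 + m₁₂ ^ 2) := by
  simp only [rhoFromS]
  set k := sscmDet m₁₁ m₁₂
  set w := √((m₁₁ - 1 / 2) ^ 2 + m₁₂ ^ 2)
  have hw : w ^ 2 = (m₁₁ - 1 / 2) ^ 2 + m₁₂ ^ 2 := sq_sqrt (by positivity)
  have hb : 0 ≤ 1 / 2 + w - m₁₁ := by
    have : |m₁₁ - 1 / 2| ≤ w := by
      rw [← sqrt_sq_eq_abs]
      exact sqrt_le_sqrt (by nlinarith)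
    linarith [le_abs_self (m₁₁ - 1 / 2)]
  set b := 1 / 2 + w - m₁₁
  rw [show 2 * (1 / 2 + w) - 1 = 2 * w by ring,
    show (1 / 2 + w) * (1 - (1 / 2 + w)) = k by simp only [k, sscmDet]; linear_combination -hw]
  have hbb : m₁₂ ^ 2 + b ^ 2 = 2 * w * b := by linear_combination -hw
  set r := 2 * w * b / k with hr_def
  have hr : 0 ≤ r := by positivity
  rw [show 2 * w / k * m₁₂ * b = r * m₁₂ by ring,
    show (m₁₂ ^ 2 + b ^ 2) ^ 2 + (m₁₂ * (2 * w / k) * b) ^ 2 = r ^ 2 * (k ^ 2 + m₁₂ ^ 2) by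
      rw [hbb, hr_def]; field_simp,
    sqrt_mul (sq_nonneg r), sqrt_sq hr]
  rcases hr.eq_or_lt with hr0 | hr0
  · have hm₁₂ : m₁₂ = 0 := by
      have : w * b = 0 := by simpa [r, h.ne'] using hr0.symm
      nlinarith
    simp [hm₁₂]
  · exact mul_div_mul_left _ _ hr0.ne'

theorem hasDerivAt_rhoFromS {m₁₁ m₁₂ : ℝ → ℝ} {m₁₁' m₁₂' x : ℝ} (h₁₁ : HasDerivAt m₁₁ m₁₁' x)
    (h₁₂ : HasDerivAt m₁₂ m₁₂' x) (hpos : 0 < sscmDet (m₁₁ x) (m₁₂ x)) :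
    HasDerivAt (fun t ↦ rhoFromS (m₁₁ t) (m₁₂ t))
      (sscmDet (m₁₁ x) (m₁₂ x) * (sscmDet (m₁₁ x) (m₁₂ x) * m₁₂'
          - m₁₂ x * (m₁₁' * (1 - 2 * m₁₁ x) - 2 * m₁₂ x * m₁₂'))
        / ((sscmDet (m₁₁ x) (m₁₂ x) ^ 2 + m₁₂ x ^ 2)
          * √(sscmDet (m₁₁ x) (m₁₂ x) ^ 2 + m₁₂ x ^ 2)))
      x := by
  have hdet : HasDerivAt (fun t ↦ sscmDet (m₁₁ t) (m₁₂ t))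
      (m₁₁' * (1 - 2 * m₁₁ x) - 2 * m₁₂ x * m₁₂') x := by
    simp only [sscmDet]
    exact ((h₁₁.mul (h₁₁.const_sub 1)).sub (h₁₂.pow 2)).congr_deriv (by ring)
  refine (h₁₂.div_sqrt_sq_add_sq hdet (by positivity)).congr_of_eventuallyEq ?_
  filter_upwards [hdet.continuousAt.eventually (lt_mem_nhds hpos)] with t ht
  exact rhoFromS_eq ht

theorem spatial_sign_correlation_influence_function_general
    (a ρ : ℝ) (ha : 0 < a) (hρ₁ : -1 < ρ) (hρ₂ : ρ < 1)
    (R : Matrix (Fin 2) (Fin 2) ℝ) (hR : R.PosDef)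
    (hRsq : R * R = !![a, ρ; ρ, a⁻¹])
    (x₁ x₂ : ℝ) (hx : (x₁, x₂) ≠ (0, 0)) :
    HasDerivAt (fun ε : ℝ => rhoFromS
        ((1 - ε) * ((R.trace)⁻¹ • R) 0 0 + ε * (x₁ * x₁ / (x₁ ^ 2 + x₂ ^ 2)))
        ((1 - ε) * ((R.trace)⁻¹ • R) 0 1 + ε * (x₁ * x₂ / (x₁ ^ 2 + x₂ ^ 2))))
      ((-(((a ^ 2 + 1) * ρ * Real.sqrt (1 - ρ ^ 2) + 2 * a * ρ * (1 - ρ ^ 2))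
            * (a ^ 2 * x₂ ^ 2 + x₁ ^ 2))
        - ((a ^ 4 + 6 * a ^ 2 + 1) * (ρ ^ 2 - 1)
            + 2 * a * (a ^ 2 + 1) * Real.sqrt (1 - ρ ^ 2) * (ρ ^ 2 - 2)) * (x₁ * x₂))
       / ((2 * a ^ 2 * Real.sqrt (1 - ρ ^ 2) + a * (a ^ 2 + 1)) * (x₁ ^ 2 + x₂ ^ 2)))
      0 := by
  have hρ : 0 < 1 - ρ ^ 2 := by nlinarith
  rw [inv_trace_smul_eq_of_mul_self_eq_shape ha.ne' hR hRsq]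
  set q := √(1 - ρ ^ 2)
  have hq : 0 < q := sqrt_pos.2 hρ
  have hq2 : q ^ 2 = 1 - ρ ^ 2 := sq_sqrt hρ.le
  set t := a + a⁻¹ + 2 * q
  have ht : 0 < t := by positivity
  have hn : x₁ ^ 2 + x₂ ^ 2 ≠ 0 := fun h ↦ hx <| by
    rw [sq, sq, mul_self_add_mul_self_eq_zero] at h
    rw [h.1, h.2]
  simp only [Matrix.smul_apply, of_apply, cons_val', cons_val_zero, cons_val_one, empty_val',
    cons_val_fin_one, smul_eq_mul]
  have hdet : sscmDet (t⁻¹ * (a + q)) (t⁻¹ * ρ) = q / t := by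
    simp only [sscmDet, t]; field_simp; linear_combination (-a) * hq2
  have hnorm : (q / t) ^ 2 + (t⁻¹ * ρ) ^ 2 = t⁻¹ ^ 2 := by
    rw [div_eq_mul_inv]; linear_combination t⁻¹ ^ 2 * hq2
  refine (hasDerivAt_rhoFromS (hasDerivAt_one_sub_mul_add_mul _ _ 0)
    (hasDerivAt_one_sub_mul_add_mul _ _ 0) ?_).congr_deriv ?_
  · simp only [sub_zero, one_mul, zero_mul, add_zero, hdet]; positivity
  simp only [sub_zero, one_mul, zero_mul, add_zero, hdet]
  rw [hnorm, sqrt_sq (by positivity), ← hq2, show ρ ^ 2 - 1 = -q ^ 2 by linarith,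
    show ρ ^ 2 - 2 = -1 - q ^ 2 by linarith]
  -- `q² + ρ² = 1` is needed once more, for the `ρ²` coming from the derivative of `sscmDet`.
  linear_combination (norm := skip) (2 * q * (x₁ * x₂ / (x₁ ^ 2 + x₂ ^ 2) - t⁻¹ * ρ)) * hq2
  simp only [t]
  field_simp
  ring

/-- influence function of the spatial sign correlation.  Let a > 0,
ρ ∈ (−1,1), (a,ρ) ≠ (1,0), V₀ = [[a,ρ],[ρ,1/a]], R its positive definite square root,
S = R / trace R the SSCM of a bivariate elliptical distribution with shape V₀, and
x = (x₁,x₂) ≠ 0.  With S_ε = (1−ε) S + ε xxᵀ/(xᵀx), the map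
ε ↦ ρ̂(s₁₁(ε), s₁₂(ε)) is differentiable at ε = 0 with the stated derivative. -/
theorem spatial_sign_correlation_influence_function
    (a ρ : ℝ) (ha : 0 < a) (hρ₁ : -1 < ρ) (hρ₂ : ρ < 1) (hne : (a, ρ) ≠ (1, 0))
    (R : Matrix (Fin 2) (Fin 2) ℝ) (hR : R.PosDef)
    (hRsq : R * R = !![a, ρ; ρ, a⁻¹])
    (x₁ x₂ : ℝ) (hx : (x₁, x₂) ≠ (0, 0)) :
    HasDerivAt (fun ε : ℝ => rhoFromS
        ((1 - ε) * ((R.trace)⁻¹ • R) 0 0 + ε * (x₁ * x₁ / (x₁ ^ 2 + x₂ ^ 2)))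
        ((1 - ε) * ((R.trace)⁻¹ • R) 0 1 + ε * (x₁ * x₂ / (x₁ ^ 2 + x₂ ^ 2))))
      ((-(((a ^ 2 + 1) * ρ * Real.sqrt (1 - ρ ^ 2) + 2 * a * ρ * (1 - ρ ^ 2))
            * (a ^ 2 * x₂ ^ 2 + x₁ ^ 2))
        - ((a ^ 4 + 6 * a ^ 2 + 1) * (ρ ^ 2 - 1)
            + 2 * a * (a ^ 2 + 1) * Real.sqrt (1 - ρ ^ 2) * (ρ ^ 2 - 2)) * (x₁ * x₂))
       / ((2 * a ^ 2 * Real.sqrt (1 - ρ ^ 2) + a * (a ^ 2 + 1)) * (x₁ ^ 2 + x₂ ^ 2)))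
      0 :=
  spatial_sign_correlation_influence_function_general a ρ ha hρ₁ hρ₂ R hR hRsq x₁ x₂ hx
end

section
/- Let ρ ∈ (−1,1), ρ ≠ 0, and define for x = (x_1,x_2) ∈ ℝ², x ≠ 0, the function IF(x) = [ −{ 2 ρ √(1−ρ²) + 2 ρ (1−ρ²) } (x_2² + x_1²) − { 8(ρ² − 1) + 4 √(1−ρ²) (ρ² − 2) } x_1 x_2 ] / [ { 2 √(1−ρ²) + 2 } (x_1² + x_2²) ] (this is the influence function of the spatial sign correlation at a bivariate elliptical distribution with equal marginal scales, i.e., a = 1). Then the gross-error sensitivity sup_{x ≠ 0} |IF(x)| equals [ √{ (ρ² − 1)(−ρ⁴ + 8ρ² + 4√(1−ρ²)(ρ² − 2) − 8) } + |ρ| ( √(1−ρ²) − ρ² + 1 ) ] / ( √(1−ρ²) + 1 ). -/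
open Real

/-- gross-error sensitivity of the spatial sign correlation for a = 1.
For ρ ∈ (−1,1), ρ ≠ 0, the supremum over x ≠ 0 of |IF(x)|, where
IF(x) = [−(2ρ√(1−ρ²) + 2ρ(1−ρ²))(x₁²+x₂²) − (8(ρ²−1) + 4√(1−ρ²)(ρ²−2)) x₁x₂] /
        [(2√(1−ρ²) + 2)(x₁²+x₂²)],
equals [√{(ρ²−1)(−ρ⁴+8ρ²+4√(1−ρ²)(ρ²−2)−8)} + |ρ|(√(1−ρ²)−ρ²+1)] / (√(1−ρ²)+1). -/
theorem spatial_sign_correlation_gross_error_sensitivity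
    (ρ : ℝ) (hρ₁ : -1 < ρ) (hρ₂ : ρ < 1) (hρ₀ : ρ ≠ 0) :
    sSup {y : ℝ | ∃ x₁ x₂ : ℝ, (x₁, x₂) ≠ (0, 0) ∧
        y = |(-((2 * ρ * Real.sqrt (1 - ρ ^ 2) + 2 * ρ * (1 - ρ ^ 2)) * (x₂ ^ 2 + x₁ ^ 2))
              - (8 * (ρ ^ 2 - 1) + 4 * Real.sqrt (1 - ρ ^ 2) * (ρ ^ 2 - 2)) * (x₁ * x₂))
            / ((2 * Real.sqrt (1 - ρ ^ 2) + 2) * (x₁ ^ 2 + x₂ ^ 2))|}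
      = (Real.sqrt ((ρ ^ 2 - 1) *
            (-ρ ^ 4 + 8 * ρ ^ 2 + 4 * Real.sqrt (1 - ρ ^ 2) * (ρ ^ 2 - 2) - 8))
          + |ρ| * (Real.sqrt (1 - ρ ^ 2) - ρ ^ 2 + 1))
        / (Real.sqrt (1 - ρ ^ 2) + 1) := by
  have hρsq : ρ ^ 2 < 1 := by nlinarith
  set s := Real.sqrt (1 - ρ ^ 2) with hs
  have hs0 : 0 < s := Real.sqrt_pos.mpr (by nlinarith)
  have hs2 : s ^ 2 = 1 - ρ ^ 2 := Real.sq_sqrt (by nlinarith)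
  have e1 : (1 : ℝ) - ρ ^ 2 = s ^ 2 := hs2.symm
  have e2 : ρ ^ 2 - 1 = -s ^ 2 := by linarith
  have e3 : ρ ^ 2 - 2 = -(1 + s ^ 2) := by linarith
  have hsqrt : Real.sqrt ((ρ ^ 2 - 1) *
      (-ρ ^ 4 + 8 * ρ ^ 2 + 4 * s * (ρ ^ 2 - 2) - 8)) = s * (1 + s) ^ 2 := by
    rw [show (ρ ^ 2 - 1) * (-ρ ^ 4 + 8 * ρ ^ 2 + 4 * s * (ρ ^ 2 - 2) - 8)
        = (s * (1 + s) ^ 2) ^ 2 by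
        linear_combination (-s ^ 4 - 4 * s ^ 3 - (6 + (1 - ρ ^ 2)) * s ^ 2
          - (4 + 4 * (1 - ρ ^ 2)) * s - (1 + 6 * (1 - ρ ^ 2) + (1 - ρ ^ 2) ^ 2)) * hs2]
    exact Real.sqrt_sq (by positivity)
  have hRHS : (Real.sqrt ((ρ ^ 2 - 1) *
        (-ρ ^ 4 + 8 * ρ ^ 2 + 4 * s * (ρ ^ 2 - 2) - 8))
      + |ρ| * (s - ρ ^ 2 + 1)) / (s + 1) = s * (|ρ| + 1 + s) := by
    rw [hsqrt, div_eq_iff (by positivity : s + 1 ≠ 0)]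
    linear_combination (-|ρ|) * hs2
  rw [hRHS]
  apply IsGreatest.csSup_eq
  constructor
  · -- membership: pick (1, -1) if ρ > 0, (1, 1) if ρ < 0
    rcases hρ₀.lt_or_gt with hneg | hpos
    · refine ⟨1, 1, by simp, ?_⟩
      have habs : |ρ| = -ρ := abs_of_neg hneg
      rw [habs]
      have hval : (-((2 * ρ * s + 2 * ρ * (1 - ρ ^ 2)) * ((1:ℝ) ^ 2 + (1:ℝ) ^ 2))
            - (8 * (ρ ^ 2 - 1) + 4 * s * (ρ ^ 2 - 2)) * ((1:ℝ) * 1))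
          / ((2 * s + 2) * ((1:ℝ) ^ 2 + (1:ℝ) ^ 2)) = s * (-ρ + 1 + s) := by
        rw [div_eq_iff (by positivity : (2 * s + 2) * ((1:ℝ) ^ 2 + (1:ℝ) ^ 2) ≠ 0)]
        linear_combination (4 * ρ - 4 * s - 8) * hs2
      rw [hval, abs_of_nonneg (by nlinarith : (0:ℝ) ≤ s * (-ρ + 1 + s))]
    · refine ⟨1, -1, by simp, ?_⟩
      have habs : |ρ| = ρ := abs_of_pos hpos
      rw [habs]
      have hval : (-((2 * ρ * s + 2 * ρ * (1 - ρ ^ 2)) * ((-1:ℝ) ^ 2 + (1:ℝ) ^ 2))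
            - (8 * (ρ ^ 2 - 1) + 4 * s * (ρ ^ 2 - 2)) * ((1:ℝ) * (-1)))
          / ((2 * s + 2) * ((1:ℝ) ^ 2 + (-1:ℝ) ^ 2)) = -(s * (ρ + 1 + s)) := by
        rw [div_eq_iff (by positivity : (2 * s + 2) * ((1:ℝ) ^ 2 + (-1:ℝ) ^ 2) ≠ 0)]
        linear_combination (4 * ρ + 8 + 4 * s) * hs2
      rw [hval, abs_neg, abs_of_nonneg (by nlinarith : (0:ℝ) ≤ s * (ρ + 1 + s))]
  · -- upper bound
    rintro y ⟨x₁, x₂, hx, rfl⟩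
    have hx' : x₁ ≠ 0 ∨ x₂ ≠ 0 := by
      by_contra h
      push_neg at h
      exact hx (by simp [h.1, h.2])
    have hS : 0 < x₁ ^ 2 + x₂ ^ 2 := by
      rcases hx' with h | h
      · have := pow_pos (abs_pos.mpr h) 2
        rw [show |x₁| ^ 2 = x₁ ^ 2 from sq_abs x₁] at this
        nlinarith [sq_nonneg x₂]
      · have := pow_pos (abs_pos.mpr h) 2
        rw [show |x₂| ^ 2 = x₂ ^ 2 from sq_abs x₂] at this
        nlinarith [sq_nonneg x₁]
    have hden : 0 < (2 * s + 2) * (x₁ ^ 2 + x₂ ^ 2) := by positivity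
    rw [abs_div, abs_of_pos hden, div_le_iff₀ hden]
    rw [abs_le]
    constructor
    · have h1 : 0 ≤ s * (1 + s) * ((|ρ| - ρ) * (x₁ ^ 2 + x₂ ^ 2)) := by
        have : 0 ≤ |ρ| - ρ := by linarith [le_abs_self ρ]
        positivity
      have h2 : 0 ≤ s * (1 + s) ^ 2 * ((x₁ + x₂) ^ 2) := by positivity
      have key : (-((2 * ρ * s + 2 * ρ * (1 - ρ ^ 2)) * (x₂ ^ 2 + x₁ ^ 2))
            - (8 * (ρ ^ 2 - 1) + 4 * s * (ρ ^ 2 - 2)) * (x₁ * x₂))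
          + s * (|ρ| + 1 + s) * ((2 * s + 2) * (x₁ ^ 2 + x₂ ^ 2))
          = 2 * (s * (1 + s) * ((|ρ| - ρ) * (x₁ ^ 2 + x₂ ^ 2)))
            + 2 * (s * (1 + s) ^ 2 * ((x₁ + x₂) ^ 2)) := by
        linear_combination (2 * ρ * (x₁ ^ 2 + x₂ ^ 2) - (8 + 4 * s) * (x₁ * x₂)) * hs2
      linarith [h1, h2]
    · have h1 : 0 ≤ s * (1 + s) * ((ρ + |ρ|) * (x₁ ^ 2 + x₂ ^ 2)) := by
        have : 0 ≤ ρ + |ρ| := by linarith [neg_abs_le ρ]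
        positivity
      have h2 : 0 ≤ s * (1 + s) ^ 2 * ((x₁ - x₂) ^ 2) := by positivity
      have key : s * (|ρ| + 1 + s) * ((2 * s + 2) * (x₁ ^ 2 + x₂ ^ 2))
          - (-((2 * ρ * s + 2 * ρ * (1 - ρ ^ 2)) * (x₂ ^ 2 + x₁ ^ 2))
            - (8 * (ρ ^ 2 - 1) + 4 * s * (ρ ^ 2 - 2)) * (x₁ * x₂))
          = 2 * (s * (1 + s) * ((ρ + |ρ|) * (x₁ ^ 2 + x₂ ^ 2)))
            + 2 * (s * (1 + s) ^ 2 * ((x₁ - x₂) ^ 2)) := by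
        linear_combination (-2 * ρ * (x₁ ^ 2 + x₂ ^ 2) + (8 + 4 * s) * (x₁ * x₂)) * hs2
      linarith [h1, h2]
end

section
/- Let a > 0 and ρ ∈ (−1,1) with (a,ρ) ≠ (1,0), let V_0 be the 2×2 matrix with rows (a, ρ) and (ρ, 1/a), and set q = 4a²ρ² + (a² − 1)², k = a² + 1 + √q, m = a² + 1 − √q. Then the matrix V_0^{1/2} / trace(V_0^{1/2}) (where V_0^{1/2} is the positive definite square root) has (1,1) entry s_{11} = [ √k (4a²ρ² + √q (a² − 1) + (a² − 1)²) + √m (4a²ρ² − √q (a² − 1) + (a² − 1)²) ] / ( 2 q (√m + √k) ) and (1,2) entry s_{12} = a ρ (√k − √m)² / (2q). -/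
open Matrix Real

/-!
A 2×2 matrix satisfies `R² - (tr R) R + (det R) 1 = 0` and `(tr R)² = tr R² + 2 det R`, so
`R / tr R = (R² + det R • 1) / (tr R² + 2 det R)`. For the positive definite root `R` of `V₀`
this gives `R / tr R = (V₀ + d • 1) / (a + a⁻¹ + 2d)` with `d = det R = √(1 - ρ²)`.
The eigenvalues of `V₀` are `k / 2a` and `m / 2a`, and `km = (a² + 1)² - q = (2ad)²`, so
`√k √m = 2ad`; together with `(√k)² ± (√m)² = 2(a² + 1), 2√q` this turns the closed forms into
polynomial identities after clearing denominators.
-/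

namespace Matrix

variable {K : Type*} [Field K]

theorem trace_sq_fin_two (R : Matrix (Fin 2) (Fin 2) K) :
    R.trace ^ 2 = (R * R).trace + 2 * R.det := by
  simp only [trace_fin_two, det_fin_two, mul_apply, Fin.sum_univ_two]
  ring

theorem trace_smul_self_fin_two (R : Matrix (Fin 2) (Fin 2) K) :
    R.trace • R = R * R + R.det • 1 := by
  ext i j
  fin_cases i <;> fin_cases j <;>
    simp [trace_fin_two, det_fin_two, mul_apply, Fin.sum_univ_two] <;> ring

theorem inv_trace_smul_fin_two (R : Matrix (Fin 2) (Fin 2) K) :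
    R.trace⁻¹ • R = ((R * R).trace + 2 * R.det)⁻¹ • (R * R + R.det • 1) := by
  rw [← trace_sq_fin_two, ← trace_smul_self_fin_two, smul_smul, pow_two, mul_inv]
  congr 1
  simpa using (mul_self_mul_inv R.trace⁻¹).symm

theorem inv_trace_smul_apply_of_mul_self_eq {R : Matrix (Fin 2) (Fin 2) K} {a ρ : K}
    (hRsq : R * R = !![a, ρ; ρ, a⁻¹]) :
    (R.trace⁻¹ • R) 0 0 = (a + R.det) / (a + a⁻¹ + 2 * R.det) ∧
      (R.trace⁻¹ • R) 0 1 = ρ / (a + a⁻¹ + 2 * R.det) := by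
  rw [inv_trace_smul_fin_two, hRsq, trace_fin_two_of]
  simp [div_eq_inv_mul]

end Matrix

section ShapeAlgebra

variable {a ρ d q s u v : ℝ}

theorem shape_discr_pos (ha : 0 < a) (hne : (a, ρ) ≠ (1, 0)) :
    0 < 4 * a ^ 2 * ρ ^ 2 + (a ^ 2 - 1) ^ 2 := by
  rcases eq_or_ne ρ 0 with rfl | hρ
  · have ha1 : a ≠ 1 := fun h => hne (by rw [h])
    have : a ^ 2 - 1 ≠ 0 := fun h => ha1 (by nlinarith)
    positivity
  · positivity

theorem sqrt_shape_discr_le (hρ : ρ ^ 2 ≤ 1) :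
    √(4 * a ^ 2 * ρ ^ 2 + (a ^ 2 - 1) ^ 2) ≤ a ^ 2 + 1 :=
  (sqrt_le_left (by positivity)).2 (by nlinarith [sq_nonneg a])

theorem sqrt_add_sqrt_shape_discr_mul_sqrt_sub (ha : 0 < a) (hd : 0 ≤ d)
    (hd2 : d ^ 2 = 1 - ρ ^ 2) :
    √(a ^ 2 + 1 + √(4 * a ^ 2 * ρ ^ 2 + (a ^ 2 - 1) ^ 2)) *
      √(a ^ 2 + 1 - √(4 * a ^ 2 * ρ ^ 2 + (a ^ 2 - 1) ^ 2)) = 2 * a * d := by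
  rw [← sqrt_mul (by positivity), ← sqrt_sq (by positivity : 0 ≤ 2 * a * d)]
  congr 1
  linear_combination (-1) * sq_sqrt (by positivity : 0 ≤ 4 * a ^ 2 * ρ ^ 2 + (a ^ 2 - 1) ^ 2)
    - 4 * a ^ 2 * hd2

theorem sscm_diag_closed_form (ha : 0 < a) (hd : 0 ≤ d) (hd2 : d ^ 2 = 1 - ρ ^ 2)
    (hq : q = 4 * a ^ 2 * ρ ^ 2 + (a ^ 2 - 1) ^ 2) (hq0 : q ≠ 0)
    (hu : u ^ 2 = a ^ 2 + 1 + s) (hv : v ^ 2 = a ^ 2 + 1 - s) (huv : u * v = 2 * a * d)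
    (hu0 : 0 < u) (hv0 : 0 ≤ v) :
    (a + d) / (a + a⁻¹ + 2 * d) =
      (u * (4 * a ^ 2 * ρ ^ 2 + s * (a ^ 2 - 1) + (a ^ 2 - 1) ^ 2)
          + v * (4 * a ^ 2 * ρ ^ 2 - s * (a ^ 2 - 1) + (a ^ 2 - 1) ^ 2))
        / (2 * q * (v + u)) := by
  have hnum : u * (4 * a ^ 2 * ρ ^ 2 + s * (a ^ 2 - 1) + (a ^ 2 - 1) ^ 2)
        + v * (4 * a ^ 2 * ρ ^ 2 - s * (a ^ 2 - 1) + (a ^ 2 - 1) ^ 2)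
      = (v + u) * (q + (a ^ 2 - 1) * (a ^ 2 + 1 - 2 * a * d)) := by
    linear_combination (a ^ 2 - 1) * ((u - v) / 2) * (hv - hu)
      + (a ^ 2 - 1) * ((u + v) / 2) * (hu + hv) - (a ^ 2 - 1) * (u + v) * huv - (v + u) * hq
  subst hq
  rw [hnum, mul_comm (v + u), mul_div_mul_right _ _ (by positivity),
    div_eq_div_iff (by positivity) (by positivity)]
  field_simp
  linear_combination (4 * a ^ 2 * (a ^ 2 - 1)) * hd2

theorem sscm_offDiag_closed_form (ha : 0 < a) (hd : 0 ≤ d) (hd2 : d ^ 2 = 1 - ρ ^ 2)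
    (hq : q = 4 * a ^ 2 * ρ ^ 2 + (a ^ 2 - 1) ^ 2) (hq0 : q ≠ 0)
    (hu : u ^ 2 = a ^ 2 + 1 + s) (hv : v ^ 2 = a ^ 2 + 1 - s) (huv : u * v = 2 * a * d) :
    ρ / (a + a⁻¹ + 2 * d) = a * ρ * (u - v) ^ 2 / (2 * q) := by
  rw [div_eq_div_iff (by positivity) (by positivity),
    show (u - v) ^ 2 = 2 * (a ^ 2 + 1 - 2 * a * d) by linear_combination hu + hv - 2 * huv]
  subst hq
  field_simp
  linear_combination (4 * a ^ 2 * ρ) * hd2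

end ShapeAlgebra

theorem sscm_entries_of_standardized_shape_general
    (a ρ : ℝ) (ha : 0 < a) (hne : (a, ρ) ≠ (1, 0))
    (R : Matrix (Fin 2) (Fin 2) ℝ) (hR : R.PosDef)
    (hRsq : R * R = !![a, ρ; ρ, a⁻¹]) :
    (let q := 4 * a ^ 2 * ρ ^ 2 + (a ^ 2 - 1) ^ 2
     let k := a ^ 2 + 1 + Real.sqrt q
     let m := a ^ 2 + 1 - Real.sqrt q
     ((R.trace)⁻¹ • R) 0 0 =
        (Real.sqrt k * (4 * a ^ 2 * ρ ^ 2 + Real.sqrt q * (a ^ 2 - 1) + (a ^ 2 - 1) ^ 2)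
          + Real.sqrt m * (4 * a ^ 2 * ρ ^ 2 - Real.sqrt q * (a ^ 2 - 1) + (a ^ 2 - 1) ^ 2))
        / (2 * q * (Real.sqrt m + Real.sqrt k))
      ∧ ((R.trace)⁻¹ • R) 0 1 = a * ρ * (Real.sqrt k - Real.sqrt m) ^ 2 / (2 * q)) := by
  intro q k m
  have hd : 0 < R.det := hR.det_pos
  have hd2 : R.det ^ 2 = 1 - ρ ^ 2 := by
    rw [sq, ← det_mul, hRsq, det_fin_two_of, mul_inv_cancel₀ ha.ne', sq]
  have hq : 0 < q := shape_discr_pos ha hne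
  have hk : 0 < k := by positivity
  have hm : 0 ≤ m := sub_nonneg.2 (sqrt_shape_discr_le (by nlinarith))
  have hkm := sqrt_add_sqrt_shape_discr_mul_sqrt_sub ha hd.le hd2
  obtain ⟨h00, h01⟩ := inv_trace_smul_apply_of_mul_self_eq hRsq
  rw [h00, h01]
  exact ⟨sscm_diag_closed_form ha hd.le hd2 rfl hq.ne' (sq_sqrt hk.le) (sq_sqrt hm) hkm
      (sqrt_pos.2 hk) (sqrt_nonneg _),
    sscm_offDiag_closed_form ha hd.le hd2 rfl hq.ne' (sq_sqrt hk.le) (sq_sqrt hm) hkm⟩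

/-- entries of the SSCM of a bivariate elliptical distribution with
standardized shape V₀ = [[a,ρ],[ρ,1/a]].  With q = 4a²ρ² + (a²−1)², k = a²+1+√q,
m = a²+1−√q, and R the positive definite square root of V₀, the matrix
S = R / trace R has
S₁₁ = [√k(4a²ρ² + √q(a²−1) + (a²−1)²) + √m(4a²ρ² − √q(a²−1) + (a²−1)²)]/(2q(√m+√k))
and S₁₂ = aρ(√k−√m)²/(2q). -/
theorem sscm_entries_of_standardized_shape
    (a ρ : ℝ) (ha : 0 < a) (hρ₁ : -1 < ρ) (hρ₂ : ρ < 1) (hne : (a, ρ) ≠ (1, 0))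
    (R : Matrix (Fin 2) (Fin 2) ℝ) (hR : R.PosDef)
    (hRsq : R * R = !![a, ρ; ρ, a⁻¹]) :
    (let q := 4 * a ^ 2 * ρ ^ 2 + (a ^ 2 - 1) ^ 2
     let k := a ^ 2 + 1 + Real.sqrt q
     let m := a ^ 2 + 1 - Real.sqrt q
     ((R.trace)⁻¹ • R) 0 0 =
        (Real.sqrt k * (4 * a ^ 2 * ρ ^ 2 + Real.sqrt q * (a ^ 2 - 1) + (a ^ 2 - 1) ^ 2)
          + Real.sqrt m * (4 * a ^ 2 * ρ ^ 2 - Real.sqrt q * (a ^ 2 - 1) + (a ^ 2 - 1) ^ 2))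
        / (2 * q * (Real.sqrt m + Real.sqrt k))
      ∧ ((R.trace)⁻¹ • R) 0 1 = a * ρ * (Real.sqrt k - Real.sqrt m) ^ 2 / (2 * q)) :=
  sscm_entries_of_standardized_shape_general a ρ ha hne R hR hRsq
end
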